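/- Let p₀, p₁ ≥ 0 with p₀+p₁ = 1, and q₀₀, q₁₀, q₀₁, q₁₁ ∈ [0,1] with q₀₀+q₁₀ = 1 and q₀₁+q₁₁ = 1. Suppose q₀₀ ≤ 1/2 and q₁₁ ≤ 1/2. Then for all ω₀₀, ω₁₀, ω₀₁, ω₁₁ ∈ [0,1] with ω₀₀+ω₁₀ = 1 and ω₀₁+ω₁₁ = 1, the probabilistic accuracy p₀(ω₀₀ q₀₀ + ω₁₀ q₁₀) + p₁(ω₀₁ q₀₁ + ω₁₁ q₁₁) is at least the identity-mapping accuracy p₀ q₀₀ + p₁ q₁₁. -/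
import Mathlib

theorem stmt_2
    (p0 p1 q00 q10 q01 q11 : ℝ)
    (hp0 : 0 ≤ p0) (hp1 : 0 ≤ p1) (hp : p0 + p1 = 1)
    (hq00 : q00 ∈ Set.Icc (0:ℝ) 1) (hq10 : q10 ∈ Set.Icc (0:ℝ) 1)
    (hq01 : q01 ∈ Set.Icc (0:ℝ) 1) (hq11 : q11 ∈ Set.Icc (0:ℝ) 1)
    (hq0 : q00 + q10 = 1) (hq1 : q01 + q11 = 1)
    (h00 : q00 ≤ 1/2) (h11 : q11 ≤ 1/2) :
    ∀ w00 w10 w01 w11 : ℝ,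
      w00 ∈ Set.Icc (0:ℝ) 1 → w10 ∈ Set.Icc (0:ℝ) 1 →
      w01 ∈ Set.Icc (0:ℝ) 1 → w11 ∈ Set.Icc (0:ℝ) 1 →
      w00 + w10 = 1 → w01 + w11 = 1 →
      p0 * (w00 * q00 + w10 * q10) + p1 * (w01 * q01 + w11 * q11)
        ≥ p0 * q00 + p1 * q11 := by
  intro w00 w10 w01 w11 hw00 hw10 hw01 hw11 hw0 hw1
  have h1 : w00 * q00 + w10 * q10 ≥ q00 := by nlinarith [mul_nonneg hw10.1 (by linarith : (0:ℝ) ≤ q10 - q00)]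
  have h2 : w01 * q01 + w11 * q11 ≥ q11 := by nlinarith [mul_nonneg hw01.1 (by linarith : (0:ℝ) ≤ q01 - q11)]
  have := mul_le_mul_of_nonneg_left h1 hp0
  have := mul_le_mul_of_nonneg_left h2 hp1
  linarith
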